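/- Let F ∈ 𝔉_1 be a symmetric distribution concentrated on the set of odd integers (i.e., F assigns probability 1 to {2k+1 : k ∈ ℤ}). Then for every n ∈ ℕ, ρ(F^n, F^{n+1}) ≥ Q(F^n, 0)/2, where Q(F^n, 0) = sup_x F^n{ {x} } is the maximal point mass of F^n. -/

import Mathlib

open MeasureTheory RealInnerProductSpace
open scoped ENNReal

noncomputable section

abbrev Euc (d : ℕ) := EuclideanSpace ℝ (Fin d)

/-- Convolution of two measures on an additive structure. -/
def mconv {α : Type*} [MeasurableSpace α] [Add α] (μ ν : Measure α) : Measure α :=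
  (μ.prod ν).map (fun p => p.1 + p.2)

/-- Convolution power `μ^{*n}`, with `μ^{*0}` the Dirac measure at `0`. -/
def convPow {α : Type*} [MeasurableSpace α] [AddMonoid α] (μ : Measure α) : ℕ → Measure α
  | 0 => Measure.dirac 0
  | n + 1 => mconv (convPow μ n) μ

/-- Convolution product of a finite family of measures. -/
def convProd {α : Type*} [MeasurableSpace α] [AddMonoid α] :
    ∀ {n : ℕ}, (Fin n → Measure α) → Measure α
  | 0, _ => Measure.dirac 0
  | n + 1, G => mconv (convProd (fun i : Fin n => G i.castSucc)) (G (Fin.last n))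

/-- The compound Poisson measure `e(a·μ) = e^{-a} ∑_k a^k μ^{*k}/k!`. -/
def cpois {α : Type*} [MeasurableSpace α] [AddMonoid α] (a : ℝ) (μ : Measure α) : Measure α :=
  Measure.sum fun k : ℕ =>
    (ENNReal.ofReal (Real.exp (-a) * a ^ k / k.factorial)) • convPow μ k

/-- A measure is symmetric if it is invariant under `x ↦ -x`. -/
def IsSymmMeasure {d : ℕ} (μ : Measure (Euc d)) : Prop :=
  μ.map (fun x => -x) = μ

/-- Characteristic function of a measure on `ℝ^d`. -/
def charFn {d : ℕ} (μ : Measure (Euc d)) (t : Euc d) : ℂ :=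
  ∫ x, Complex.exp ((⟪t, x⟫ : ℂ) * Complex.I) ∂μ

/-- Characteristic function of a measure on `ℝ`. -/
def charFn1 (μ : Measure ℝ) (t : ℝ) : ℂ :=
  ∫ x, Complex.exp (((t * x : ℝ) : ℂ) * Complex.I) ∂μ

/-- Convex polyhedra determined by the directions `t 1, …, t m`. -/
def polyhedraOn {d m : ℕ} (t : Fin m → Euc d) : Set (Set (Euc d)) :=
  {X | ∃ a b : Fin m → EReal,
    X = {x | ∀ j, a j ≤ ((⟪x, t j⟫ : ℝ) : EReal) ∧ ((⟪x, t j⟫ : ℝ) : EReal) ≤ b j}}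

/-- The collection `𝔛_m` of convex polyhedra determined by `m` pairs of parallel hyperplanes. -/
def polyhedra (d m : ℕ) : Set (Set (Euc d)) :=
  {X | ∃ t : Fin m → Euc d, X ∈ polyhedraOn t}

/-- The distance `ρ_m(G,H) = sup_{X ∈ 𝔛_m} |G{X} - H{X}|`. -/
def rhoPoly {d : ℕ} (m : ℕ) (G H : Measure (Euc d)) : ℝ :=
  ⨆ X ∈ polyhedra d m, |(G X).toReal - (H X).toReal|

/-- The Lévy concentration function `Q(μ, b) = sup_x μ[x, x+b]`. -/
def concFn (μ : Measure ℝ) (b : ℝ) : ℝ :=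
  ⨆ x : ℝ, (μ (Set.Icc x (x + b))).toReal

/-- `q(H, X) = inf_{‖t‖=1} Q(𝓛(⟨ξ,t⟩), λ{⟨x,t⟩ : x ∈ X})` where `H = 𝓛(ξ)`. -/
def qFn {d : ℕ} (H : Measure (Euc d)) (X : Set (Euc d)) : ℝ :=
  ⨅ t ∈ {t : Euc d | ‖t‖ = 1},
    concFn (H.map fun x => ⟪x, t⟫) (volume ((fun x => ⟪x, t⟫) '' X)).toReal

/-- The uniform (Kolmogorov) distance on `ℝ^d`. -/
def kolmDist {d : ℕ} (G H : Measure (Euc d)) : ℝ :=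
  ⨆ x : Euc d, |(G {y | ∀ i, y i ≤ x i}).toReal - (H {y | ∀ i, y i ≤ x i}).toReal|

/-- The uniform (Kolmogorov) distance on `ℝ`. -/
def kolmDist1 (G H : Measure ℝ) : ℝ :=
  ⨆ x : ℝ, |(G (Set.Iic x)).toReal - (H (Set.Iic x)).toReal|

end

/-! A point mass of `F^{*n}` at `x` is a jump of its distribution function. Since `F` lives on the
odd integers, `F^{*n}` lives on `n + 2ℤ` and `F^{*(n+1)}` on `n + 1 + 2ℤ`, so at a point `x` of
`n + 2ℤ` the distribution function of `F^{*(n+1)}` is constant on `[x - 1, x]` while that of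
`F^{*n}` rises by at least `F^{*n}{x}`; comparing the two at `x - 1` and at `x` gives the bound. -/

open Set

section Convolution

variable {α : Type*} [MeasurableSpace α]

instance isProbabilityMeasure_mconv [Add α] [MeasurableAdd₂ α] (μ ν : Measure α)
    [IsProbabilityMeasure μ] [IsProbabilityMeasure ν] : IsProbabilityMeasure (mconv μ ν) :=
  Measure.isProbabilityMeasure_map measurable_add.aemeasurable

instance isProbabilityMeasure_convPow [AddMonoid α] [MeasurableAdd₂ α] (μ : Measure α)
    [IsProbabilityMeasure μ] (n : ℕ) : IsProbabilityMeasure (convPow μ n) := by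
  induction n with
  | zero => exact Measure.dirac.isProbabilityMeasure
  | succ n ih => exact isProbabilityMeasure_mconv (convPow μ n) μ

theorem ae_mem_mconv [Add α] [MeasurableAdd₂ α] {μ ν : Measure α} {A B C : Set α}
    (hC : MeasurableSet C) (hA : ∀ᵐ a ∂μ, a ∈ A) (hB : ∀ᵐ b ∂ν, b ∈ B)
    (hABC : ∀ a ∈ A, ∀ b ∈ B, a + b ∈ C) : ∀ᵐ x ∂mconv μ ν, x ∈ C := by
  rw [mconv, ae_map_iff (p := (· ∈ C)) measurable_add.aemeasurable hC]
  filter_upwards [Measure.quasiMeasurePreserving_fst.ae hA,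
    Measure.quasiMeasurePreserving_snd.ae hB] with p hpA hpB
  exact hABC _ hpA _ hpB

end Convolution

def parityClass (n : ℤ) : Set ℝ := {x | ∃ k : ℤ, x = 2 * k + n}

theorem measurableSet_parityClass (n : ℤ) : MeasurableSet (parityClass n) := by
  refine (Set.Countable.mono ?_ (Set.countable_range fun k : ℤ => (2 * k + n : ℝ))).measurableSet
  rintro x ⟨k, rfl⟩
  exact ⟨k, rfl⟩

theorem add_mem_parityClass {m n : ℤ} {x y : ℝ} (hx : x ∈ parityClass m)
    (hy : y ∈ parityClass n) : x + y ∈ parityClass (m + n) := by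
  obtain ⟨k, rfl⟩ := hx
  obtain ⟨l, rfl⟩ := hy
  exact ⟨k + l, by push_cast; ring⟩

theorem disjoint_Ioc_parityClass_add_one {n : ℤ} {x : ℝ} (hx : x ∈ parityClass n) :
    Disjoint (Ioc (x - 1) x) (parityClass (n + 1)) := by
  obtain ⟨k, rfl⟩ := hx
  rw [Set.disjoint_left]
  rintro _ ⟨hlo, hhi⟩ ⟨l, rfl⟩
  have hlo' : 2 * k + n - 1 < 2 * l + (n + 1) := by exact_mod_cast hlo
  have hhi' : 2 * l + (n + 1) ≤ 2 * k + n := by exact_mod_cast hhi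
  omega

theorem ae_mem_parityClass_convPow {F : Measure ℝ} (hF : ∀ᵐ x ∂F, x ∈ parityClass 1) (n : ℕ) :
    ∀ᵐ x ∂convPow F n, x ∈ parityClass n := by
  induction n with
  | zero => exact (ae_dirac_iff (measurableSet_parityClass 0)).2 ⟨0, by simp⟩
  | succ n ih =>
    exact ae_mem_mconv (measurableSet_parityClass _) ih hF fun a ha b hb => by
      simpa using add_mem_parityClass ha hb

section Kolmogorov

variable {G H : Measure ℝ} [IsFiniteMeasure G] [IsFiniteMeasure H]

theorem abs_sub_le_kolmDist1 (x : ℝ) :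
    |G.real (Iic x) - H.real (Iic x)| ≤ kolmDist1 G H := by
  refine le_ciSup (f := fun y => |G.real (Iic y) - H.real (Iic y)|)
    ⟨G.real univ + H.real univ, ?_⟩ x
  rintro _ ⟨y, rfl⟩
  have hG := measureReal_mono (μ := G) (subset_univ (Iic y))
  have hH := measureReal_mono (μ := H) (subset_univ (Iic y))
  rw [abs_le]
  constructor <;> linarith [measureReal_nonneg (μ := G) (s := Iic y),
    measureReal_nonneg (μ := H) (s := Iic y)]

theorem measureReal_Ioc_le_two_mul_kolmDist1 {a x : ℝ} (hax : a ≤ x) (hH : H (Ioc a x) = 0) :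
    G.real (Ioc a x) ≤ 2 * kolmDist1 G H := by
  have hsplit : ∀ μ : Measure ℝ, [IsFiniteMeasure μ] →
      μ.real (Iic x) = μ.real (Iic a) + μ.real (Ioc a x) := fun μ _ => by
    rw [← measureReal_union (Iic_disjoint_Ioc le_rfl) measurableSet_Ioc,
      Iic_union_Ioc_eq_Iic hax]
  have hHa : H.real (Ioc a x) = 0 := (measureReal_eq_zero_iff).2 hH
  have hx := abs_le.1 (abs_sub_le_kolmDist1 (G := G) (H := H) x)
  have ha := abs_le.1 (abs_sub_le_kolmDist1 (G := G) (H := H) a)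
  linarith [hsplit G, hsplit H]

end Kolmogorov

theorem measureReal_singleton_le_two_mul_kolmDist1 {G H : Measure ℝ} [IsFiniteMeasure G]
    [IsFiniteMeasure H] {n : ℤ} (hG : ∀ᵐ x ∂G, x ∈ parityClass n)
    (hH : ∀ᵐ x ∂H, x ∈ parityClass (n + 1)) (x : ℝ) :
    G.real {x} ≤ 2 * kolmDist1 G H := by
  by_cases hx : x ∈ parityClass n
  · have hHx : H (Ioc (x - 1) x) = 0 := measure_eq_zero_iff_ae_notMem.2 <| by
      filter_upwards [hH] with y hy hyx
      exact (disjoint_Ioc_parityClass_add_one hx).notMem_of_mem_left hyx hy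
    calc G.real {x} ≤ G.real (Ioc (x - 1) x) :=
          measureReal_mono (singleton_subset_iff.2 ⟨by linarith, le_rfl⟩)
      _ ≤ 2 * kolmDist1 G H := measureReal_Ioc_le_two_mul_kolmDist1 (by linarith) hHx
  · have hGx : G {x} = 0 := measure_eq_zero_iff_ae_notMem.2 <| by
      filter_upwards [hG] with y hy hyx
      exact hx (mem_singleton_iff.1 hyx ▸ hy)
    rw [measureReal_def, hGx, ENNReal.toReal_zero]
    linarith [(abs_nonneg _).trans (abs_sub_le_kolmDist1 (G := G) (H := H) 0)]

theorem stmt18_general (F : Measure ℝ) (hF : IsProbabilityMeasure F)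
    (hodd : F {x : ℝ | ∃ k : ℤ, x = 2 * k + 1} = 1) (n : ℕ) :
    (⨆ x : ℝ, ((convPow F n) {x}).toReal) / 2 ≤
      kolmDist1 (convPow F n) (convPow F (n + 1)) := by
  have hF1 : ∀ᵐ x ∂F, x ∈ parityClass 1 := by
    rw [ae_iff_measure_eq (p := (· ∈ parityClass 1)) (measurableSet_parityClass 1).nullMeasurableSet, measure_univ]
    simpa [parityClass] using hodd
  have hG := ae_mem_parityClass_convPow hF1 n
  have hH : ∀ᵐ x ∂convPow F (n + 1), x ∈ parityClass (n + 1) := by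
    simpa using ae_mem_parityClass_convPow hF1 (n + 1)
  have hsup := ciSup_le (measureReal_singleton_le_two_mul_kolmDist1 hG hH)
  simp only [measureReal_def] at hsup
  linarith

theorem stmt18 (F : Measure ℝ) (hF : IsProbabilityMeasure F)
    (hsym : F.map (fun x => -x) = F)
    (hodd : F {x : ℝ | ∃ k : ℤ, x = 2 * k + 1} = 1) (n : ℕ) (hn : 0 < n) :
    (⨆ x : ℝ, ((convPow F n) {x}).toReal) / 2 ≤
      kolmDist1 (convPow F n) (convPow F (n + 1)) :=
  stmt18_general F hF hodd n
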